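/- arXiv:2303.17772 — 2 statements merged into one kernel-verified Lean document; each statement's English description precedes it below -/
import Mathlib

section
/- Let 0 ≤ ε ≤ 1 and let h, g : E → ℝ be smooth. Then pointwise on E one has A¹_ε(e^h, g) = e^h·{A¹_ε(h,g) + A³_ε(h,g)}. -/
open Real

noncomputable section

/-- Three-dimensional Euclidean space. -/
abbrev E3 := EuclideanSpace ℝ (Fin 3)

/-- Laplacian of `f : E3 → ℝ` (sum of second partial derivatives). -/
def lap (f : E3 → ℝ) : E3 → ℝ := fun x =>
  ∑ i : Fin 3, fderiv ℝ (fun y => fderiv ℝ f y (EuclideanSpace.single i 1)) x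
    (EuclideanSpace.single i 1)

/-- `B(f,g) = ∇f · ∇g`. -/
def Bp (f g : E3 → ℝ) : E3 → ℝ := fun x => (inner ℝ (gradient f x) (gradient g x) : ℝ)

/-- `T(f,g,h) = B(f,g)·Δh + B(B(f,g),h)`. -/
def Tp (f g h : E3 → ℝ) : E3 → ℝ := fun x => Bp f g x * lap h x + Bp (Bp f g) h x

/-- `B̃(f,g) = ∇(Δf)·∇g + ∇f·∇(Δg) + 2·Δf·Δg + Δ(B(f,g))`. -/
def Btil (f g : E3 → ℝ) : E3 → ℝ := fun x =>
  Bp (lap f) g x + Bp f (lap g) x + 2 * lap f x * lap g x + lap (Bp f g) x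

/-- `L_ε f = Δf − ε·Δ(Δf)`. -/
def Lop (ε : ℝ) (f : E3 → ℝ) : E3 → ℝ := fun x => lap f x - ε * lap (lap f) x

/-- `F_ε(h)`. -/
def Fop (ε : ℝ) (h : E3 → ℝ) : E3 → ℝ := fun x =>
  Bp h h x + ε * (lap h x) ^ 2 +
    ε * (-(Btil h h x) + 2 * Tp h h h x - (Bp h h x) ^ 2)

/-- `G_ε(h,v)`. -/
def Gop (ε : ℝ) (h v : E3 → ℝ) : E3 → ℝ := fun x =>
  Bp h v x + ε * lap h x * lap v x +
    ε * (-(Btil h v x) + 2 * Tp v h h x + Tp h h v x - 2 * Bp h h x * Bp h v x)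

/-- `A¹_ε(f,g) = B(f,g) + ε·Δf·Δg − ε·B̃(f,g)`. -/
def A1 (ε : ℝ) (f g : E3 → ℝ) : E3 → ℝ := fun x =>
  Bp f g x + ε * lap f x * lap g x - ε * Btil f g x

/-- `A²_ε(h) = A¹_ε(h,h) − ε·(2·T(h,h,h) + B(h,h)²)`. -/
def A2 (ε : ℝ) (h : E3 → ℝ) : E3 → ℝ := fun x =>
  A1 ε h h x - ε * (2 * Tp h h h x + (Bp h h x) ^ 2)

/-- `A³_ε(h,g) = −ε·(2·T(g,h,h) + T(h,h,g) + 2·B(h,h)·B(h,g))`. -/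
def A3 (ε : ℝ) (h g : E3 → ℝ) : E3 → ℝ := fun x =>
  -ε * (2 * Tp g h h x + Tp h h g x + 2 * Bp h h x * Bp h g x)

def pd (i : Fin 3) (f : E3 → ℝ) : E3 → ℝ := fun x => fderiv ℝ f x (EuclideanSpace.single i 1)

theorem lap_eq (f : E3 → ℝ) (x : E3) : lap f x = ∑ i : Fin 3, pd i (pd i f) x := rfl

theorem grad_apply (f : E3 → ℝ) (x : E3) (i : Fin 3) : gradient f x i = pd i f x := by
  have : (inner ℝ (gradient f x) (EuclideanSpace.single i (1:ℝ)) : ℝ) = fderiv ℝ f x (EuclideanSpace.single i 1) := by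
    rw [gradient, InnerProductSpace.toDual_symm_apply]
  rw [EuclideanSpace.inner_single_right] at this
  simpa [pd] using this

theorem Bp_eq (f g : E3 → ℝ) (x : E3) : Bp f g x = ∑ i : Fin 3, pd i f x * pd i g x := by
  simp only [Bp, PiLp.inner_apply, grad_apply, RCLike.inner_apply, conj_trivial]
  exact Finset.sum_congr rfl fun i _ => mul_comm _ _

theorem pd_smooth {f : E3 → ℝ} (hf : ContDiff ℝ (⊤:ℕ∞) f) (i : Fin 3) : ContDiff ℝ (⊤:ℕ∞) (pd i f) :=
  (hf.fderiv_right (by exact_mod_cast le_top)).clm_apply contDiff_const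

theorem pd_mul {f g : E3 → ℝ} (hf : ContDiff ℝ (⊤:ℕ∞) f) (hg : ContDiff ℝ (⊤:ℕ∞) g) (i : Fin 3) :
    pd i (fun y => f y * g y) = fun x => f x * pd i g x + g x * pd i f x := by
  funext x
  have := fderiv_fun_mul (𝕜 := ℝ) (hf.differentiable (by simp) x) (hg.differentiable (by simp) x)
  simp [pd, this]

theorem pd_add {f g : E3 → ℝ} (hf : ContDiff ℝ (⊤:ℕ∞) f) (hg : ContDiff ℝ (⊤:ℕ∞) g) (i : Fin 3) :
    pd i (fun y => f y + g y) = fun x => pd i f x + pd i g x := by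
  funext x
  have := fderiv_fun_add (𝕜 := ℝ) (hf.differentiable (by simp) x) (hg.differentiable (by simp) x)
  simp [pd, this]

theorem pd_exp {h : E3 → ℝ} (hh : ContDiff ℝ (⊤:ℕ∞) h) (i : Fin 3) :
    pd i (fun y => Real.exp (h y)) = fun x => Real.exp (h x) * pd i h x := by
  funext x
  have H : HasFDerivAt (fun y => Real.exp (h y)) (Real.exp (h x) • fderiv ℝ h x) x :=
    (Real.hasDerivAt_exp (h x)).comp_hasFDerivAt x (hh.differentiable (by simp) x).hasFDerivAt
  simp [pd, H.fderiv]

theorem exp_smooth {h : E3 → ℝ} (hh : ContDiff ℝ (⊤:ℕ∞) h) :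
    ContDiff ℝ (⊤:ℕ∞) (fun y => Real.exp (h y)) := hh.exp

theorem mul_smooth {f g : E3 → ℝ} (hf : ContDiff ℝ (⊤:ℕ∞) f) (hg : ContDiff ℝ (⊤:ℕ∞) g) :
    ContDiff ℝ (⊤:ℕ∞) (fun y => f y * g y) := hf.mul hg

theorem Bp_smooth {f g : E3 → ℝ} (hf : ContDiff ℝ (⊤:ℕ∞) f) (hg : ContDiff ℝ (⊤:ℕ∞) g) :
    ContDiff ℝ (⊤:ℕ∞) (Bp f g) := by
  have : Bp f g = fun x => ∑ i : Fin 3, pd i f x * pd i g x := funext (Bp_eq f g)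
  rw [this]
  exact ContDiff.sum fun i _ => (pd_smooth hf i).mul (pd_smooth hg i)

theorem lap_smooth {f : E3 → ℝ} (hf : ContDiff ℝ (⊤:ℕ∞) f) : ContDiff ℝ (⊤:ℕ∞) (lap f) := by
  have : lap f = fun x => ∑ i : Fin 3, pd i (pd i f) x := funext (lap_eq f)
  rw [this]
  exact ContDiff.sum fun i _ => pd_smooth (pd_smooth hf i) i

theorem Bp_comm (f g : E3 → ℝ) : Bp f g = Bp g f := by
  funext x; simp only [Bp_eq]; exact Finset.sum_congr rfl fun i _ => mul_comm _ _

theorem Bp_expL {h : E3 → ℝ} (hh : ContDiff ℝ (⊤:ℕ∞) h) (g : E3 → ℝ) :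
    Bp (fun y => Real.exp (h y)) g = fun x => Real.exp (h x) * Bp h g x := by
  funext x
  simp only [Bp_eq, pd_exp hh, Finset.mul_sum]
  exact Finset.sum_congr rfl fun i _ => by ring

theorem Bp_addL {f g : E3 → ℝ} (hf : ContDiff ℝ (⊤:ℕ∞) f) (hg : ContDiff ℝ (⊤:ℕ∞) g) (k : E3 → ℝ) :
    Bp (fun y => f y + g y) k = fun x => Bp f k x + Bp g k x := by
  funext x
  simp only [Bp_eq, pd_add hf hg, ← Finset.sum_add_distrib]
  exact Finset.sum_congr rfl fun i _ => by ring

theorem Bp_mulL {f g : E3 → ℝ} (hf : ContDiff ℝ (⊤:ℕ∞) f) (hg : ContDiff ℝ (⊤:ℕ∞) g) (k : E3 → ℝ) :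
    Bp (fun y => f y * g y) k = fun x => f x * Bp g k x + g x * Bp f k x := by
  funext x
  simp only [Bp_eq, pd_mul hf hg, Finset.mul_sum, ← Finset.sum_add_distrib]
  exact Finset.sum_congr rfl fun i _ => by ring

theorem lap_exp {h : E3 → ℝ} (hh : ContDiff ℝ (⊤:ℕ∞) h) :
    lap (fun y => Real.exp (h y)) = fun x => Real.exp (h x) * (lap h x + Bp h h x) := by
  funext x
  simp only [lap_eq, Bp_eq, pd_exp hh]
  have : ∀ i : Fin 3, pd i (fun x => Real.exp (h x) * pd i h x) =
      fun x => Real.exp (h x) * pd i (pd i h) x + pd i h x * (Real.exp (h x) * pd i h x) := by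
    intro i
    have := pd_mul (exp_smooth hh) (pd_smooth hh i) i
    simpa [pd_exp hh] using this
  simp only [this, mul_add, Finset.mul_sum, ← Finset.sum_add_distrib]
  exact Finset.sum_congr rfl fun i _ => by ring

theorem lap_mul {f g : E3 → ℝ} (hf : ContDiff ℝ (⊤:ℕ∞) f) (hg : ContDiff ℝ (⊤:ℕ∞) g) :
    lap (fun y => f y * g y) = fun x => f x * lap g x + g x * lap f x + 2 * Bp f g x := by
  funext x
  simp only [lap_eq, Bp_eq, pd_mul hf hg]
  have : ∀ i : Fin 3, pd i (fun x => f x * pd i g x + g x * pd i f x) =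
      fun x => (f x * pd i (pd i g) x + pd i g x * pd i f x) +
        (g x * pd i (pd i f) x + pd i f x * pd i g x) := by
    intro i
    rw [pd_add (hf.mul (pd_smooth hg i)) (hg.mul (pd_smooth hf i)) i,
      pd_mul hf (pd_smooth hg i) i, pd_mul hg (pd_smooth hf i) i]
  simp only [this, mul_add, Finset.mul_sum, ← Finset.sum_add_distrib]
  exact Finset.sum_congr rfl fun i _ => by ring

/-- `A¹_ε(e^h, g) = e^h·{A¹_ε(h,g) + A³_ε(h,g)}`. -/
theorem A1_exp_left (ε : ℝ) (hε0 : 0 ≤ ε) (hε1 : ε ≤ 1) (h g : E3 → ℝ)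
    (hh : ContDiff ℝ (⊤ : ℕ∞) h) (hg : ContDiff ℝ (⊤ : ℕ∞) g) (x : E3) :
    A1 ε (fun y => Real.exp (h y)) g x =
      Real.exp (h x) * (A1 ε h g x + A3 ε h g x) := by
  have hE : ContDiff ℝ (⊤:ℕ∞) (fun y => Real.exp (h y)) := hh.exp
  have hlh := lap_smooth hh
  have hBhh := Bp_smooth hh hh
  have hBhg := Bp_smooth hh hg
  have hu : ContDiff ℝ (⊤:ℕ∞) (fun x => lap h x + Bp h h x) := hlh.add hBhh
  simp only [A1, A3, Btil, Tp]
  simp only [Bp_expL hh, lap_exp hh, Bp_mulL hE hu, Bp_addL hlh hBhh,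
    lap_mul hE hBhg, lap_exp hh, Bp_expL hh, Bp_comm g h, Bp_comm h (Bp h g)]
  ring
end
end

section
/- For 0 ≤ ε ≤ 1 and k ∈ ℤ³ set α_ε(k) := 4π²|k|² + 16π⁴·ε·|k|⁴ + 1, and define S(ε) := Σ_{k₁,k₂∈ℤ³} 1/(4·α_ε(k₁)·α_ε(k₂)·α_ε(k₁+k₂)·(α_ε(k₁)+α_ε(k₂)+α_ε(k₁+k₂))). Then S(ε) is finite for every ε ∈ [0,1], and S(ε) tends to S(0) as ε tends to 0 from the right. Consequently the renormalization constants c_ε := −2·S(ε) converge, as ε ↓ 0, to the limit c := −2·S(0). -/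
open Real Filter

noncomputable section

/-- The lattice `ℤ³`. -/
abbrev Z3 := Fin 3 → ℤ

/-- Euclidean norm `|k|` of `k ∈ ℤ³`. -/
def knorm (k : Z3) : ℝ := Real.sqrt (∑ i, ((k i : ℝ)) ^ 2)

/-- `α_ε(k) = 4π²|k|² + 16π⁴ε|k|⁴ + 1`. -/
def alphaE (ε : ℝ) (k : Z3) : ℝ :=
  4 * π ^ 2 * (knorm k) ^ 2 + 16 * π ^ 4 * ε * (knorm k) ^ 4 + 1

/-- `S(ε) = Σ_{k₁,k₂} 1/(4·α_ε(k₁)·α_ε(k₂)·α_ε(k₁+k₂)·(α_ε(k₁)+α_ε(k₂)+α_ε(k₁+k₂)))`. -/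
def Sren (ε : ℝ) : ℝ :=
  ∑' p : Z3 × Z3,
    1 / (4 * alphaE ε p.1 * alphaE ε p.2 * alphaE ε (p.1 + p.2) *
      (alphaE ε p.1 + alphaE ε p.2 + alphaE ε (p.1 + p.2)))

-- basic facts
lemma knorm_nonneg (k : Z3) : 0 ≤ knorm k := Real.sqrt_nonneg _

lemma knorm_sq (k : Z3) : knorm k ^ 2 = ∑ i, ((k i : ℝ)) ^ 2 := by
  rw [knorm, Real.sq_sqrt]
  positivity

lemma one_le_alphaE {ε : ℝ} (hε : 0 ≤ ε) (k : Z3) : 1 ≤ alphaE ε k := by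
  have h1 : 0 ≤ 4 * π ^ 2 * (knorm k) ^ 2 := by positivity
  have h2 : 0 ≤ 16 * π ^ 4 * ε * (knorm k) ^ 4 := by positivity
  unfold alphaE; linarith

lemma alphaE_pos {ε : ℝ} (hε : 0 ≤ ε) (k : Z3) : 0 < alphaE ε k :=
  lt_of_lt_of_le one_pos (one_le_alphaE hε k)

lemma alpha0_le_alphaE {ε : ℝ} (hε : 0 ≤ ε) (k : Z3) : alphaE 0 k ≤ alphaE ε k := by
  have h2 : 0 ≤ 16 * π ^ 4 * ε * (knorm k) ^ 4 := by positivity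
  unfold alphaE; simp only [mul_zero, zero_mul, mul_comm]; nlinarith

-- 1-d summable majorant
def hfun (n : ℤ) : ℝ := (((1 : ℝ) + (n : ℝ) ^ 2) ^ ((2 : ℝ)/3))⁻¹

lemma hfun_nonneg (n : ℤ) : 0 ≤ hfun n := by
  unfold hfun; positivity

lemma summable_hfun : Summable hfun := by
  have key : Summable (fun n : ℤ => |(n : ℝ)| ^ (-(4/3 : ℝ))) :=
    summable_abs_int_rpow (by norm_num)
  rw [← (({0} : Finset ℤ)).summable_compl_iff]
  apply Summable.of_nonneg_of_le (fun _ => hfun_nonneg _) _ (key.subtype _)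
  rintro ⟨n, hn⟩
  have hn0 : (n : ℝ) ≠ 0 := by
    simp only [Finset.mem_singleton] at hn; exact_mod_cast hn
  have habs : 0 < |(n : ℝ)| := abs_pos.mpr hn0
  have h1 : ((n:ℝ)^2) ^ ((2:ℝ)/3) = |(n : ℝ)| ^ ((4/3 : ℝ)) := by
    rw [← sq_abs, ← Real.rpow_natCast (|(n:ℝ)|) 2, ← Real.rpow_mul (abs_nonneg _)]
    norm_num
  show hfun n ≤ |(n : ℝ)| ^ (-(4/3 : ℝ))
  rw [Real.rpow_neg (abs_nonneg _), ← h1, hfun]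
  apply inv_anti₀
  · positivity
  · apply Real.rpow_le_rpow (by positivity) (by nlinarith) (by norm_num)

-- product majorant over Z3
lemma summable_hprod : Summable (fun k : Z3 => hfun (k 0) * (hfun (k 1) * hfun (k 2))) := by
  have hh := summable_hfun
  have h2 : Summable (fun q : ℤ × ℤ => hfun q.1 * hfun q.2) :=
    hh.mul_of_nonneg hh (fun _ => hfun_nonneg _) (fun _ => hfun_nonneg _)
  have h3 : Summable (fun q : ℤ × ℤ × ℤ => hfun q.1 * (hfun q.2.1 * hfun q.2.2)) :=
    hh.mul_of_nonneg h2 (fun _ => hfun_nonneg _)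
      (fun q => mul_nonneg (hfun_nonneg _) (hfun_nonneg _))
  let e : Z3 ≃ ℤ × (ℤ × ℤ) :=
    (Fin.consEquiv (fun _ : Fin 3 => ℤ)).symm.trans (Equiv.prodCongr (Equiv.refl ℤ) (finTwoArrowEquiv ℤ))
  have := (e.summable_iff (f := fun q : ℤ × ℤ × ℤ => hfun q.1 * (hfun q.2.1 * hfun q.2.2))).mpr h3
  exact this

-- majorant G
def Gfun (k : Z3) : ℝ := ((alphaE 0 k) ^ 2)⁻¹

lemma Gfun_nonneg (k : Z3) : 0 ≤ Gfun k := by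
  have := alphaE_pos le_rfl k; unfold Gfun; positivity

lemma summable_Gfun : Summable Gfun := by
  apply Summable.of_nonneg_of_le (fun _ => Gfun_nonneg _) _ summable_hprod
  intro k
  set a : ℝ := ((k 0 : ℝ))^2
  set b : ℝ := ((k 1 : ℝ))^2
  set c : ℝ := ((k 2 : ℝ))^2
  have ha : 0 ≤ a := by positivity
  have hb : 0 ≤ b := by positivity
  have hc : 0 ≤ c := by positivity
  have hs : knorm k ^ 2 = a + b + c := by
    rw [knorm_sq, Fin.sum_univ_three]
  have halpha : 1 + (a + b + c) ≤ alphaE 0 k := by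
    have hpi : (3:ℝ) ≤ π := by linarith [Real.pi_gt_three]
    have hpi2 : (1:ℝ) ≤ 4 * π ^ 2 := by nlinarith
    have habc : (0:ℝ) ≤ a + b + c := by positivity
    have : 1 * (a+b+c) ≤ 4 * π ^ 2 * (a+b+c) :=
      mul_le_mul_of_nonneg_right hpi2 habc
    unfold alphaE; rw [hs]; nlinarith
  have hP : ((1+a)*((1+b)*(1+c))) ^ ((2:ℝ)/3) ≤ (alphaE 0 k) ^ 2 := by
    have h1 : (1+a)*((1+b)*(1+c)) ≤ (1+(a+b+c))^3 := by
      have e3 : ((1+(a+b+c)):ℝ)^3 = (1+(a+b+c))*((1+(a+b+c))*(1+(a+b+c))) := by ring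
      rw [e3]
      apply mul_le_mul (by linarith) _ (by positivity) (by linarith)
      apply mul_le_mul (by linarith) (by linarith) (by linarith) (by linarith)
    have h2 : ((1+a)*((1+b)*(1+c))) ^ ((2:ℝ)/3) ≤ ((1+(a+b+c))^3) ^ ((2:ℝ)/3) :=
      Real.rpow_le_rpow (by positivity) h1 (by norm_num)
    have h3 : ((1+(a+b+c))^3 : ℝ) ^ ((2:ℝ)/3) = (1+(a+b+c))^2 := by
      rw [← Real.rpow_natCast (1+(a+b+c)) 3, ← Real.rpow_mul (by positivity),
        ← Real.rpow_natCast (1+(a+b+c)) 2]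
      norm_num
    have h4 : (1+(a+b+c))^2 ≤ (alphaE 0 k)^2 := by nlinarith
    linarith [h2, h3 ▸ h2]
  show Gfun k ≤ hfun (k 0) * (hfun (k 1) * hfun (k 2))
  unfold Gfun hfun
  rw [← mul_inv, ← mul_inv, ← Real.mul_rpow (by positivity) (by positivity),
    ← Real.mul_rpow (by positivity) (by positivity)]
  apply inv_anti₀ (by positivity) hP

-- the summand
def term (ε : ℝ) (p : Z3 × Z3) : ℝ :=
  1 / (4 * alphaE ε p.1 * alphaE ε p.2 * alphaE ε (p.1 + p.2) *
    (alphaE ε p.1 + alphaE ε p.2 + alphaE ε (p.1 + p.2)))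

def Fb (p : Z3 × Z3) : ℝ :=
  1/8 * (Gfun p.1 * Gfun p.2 + Gfun p.1 * Gfun (p.1 + p.2))

lemma summable_Fb : Summable Fb := by
  have h12 : Summable (fun p : Z3 × Z3 => Gfun p.1 * Gfun p.2) :=
    summable_Gfun.mul_of_nonneg summable_Gfun (fun _ => Gfun_nonneg _) (fun _ => Gfun_nonneg _)
  have h13 : Summable (fun p : Z3 × Z3 => Gfun p.1 * Gfun (p.1 + p.2)) := by
    let e : Z3 × Z3 ≃ Z3 × Z3 := Equiv.prodShear (Equiv.refl Z3) (fun a => Equiv.addLeft a)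
    have := (e.summable_iff (f := fun p : Z3 × Z3 => Gfun p.1 * Gfun p.2)).mpr h12
    exact this.congr (fun p => rfl)
  exact ((h12.add h13).mul_left _)

lemma term_nonneg {ε : ℝ} (hε : 0 ≤ ε) (p : Z3 × Z3) : 0 ≤ term ε p := by
  have h1 := alphaE_pos hε p.1
  have h2 := alphaE_pos hε p.2
  have h3 := alphaE_pos hε (p.1 + p.2)
  unfold term; positivity

lemma term_le_Fb {ε : ℝ} (hε : 0 ≤ ε) (p : Z3 × Z3) : term ε p ≤ Fb p := by
  set A1 := alphaE ε p.1 with hA1d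
  set A2 := alphaE ε p.2 with hA2d
  set A3 := alphaE ε (p.1 + p.2) with hA3d
  set a1 := alphaE 0 p.1 with ha1d
  set a2 := alphaE 0 p.2 with ha2d
  set a3 := alphaE 0 (p.1 + p.2) with ha3d
  have h11 : a1 ≤ A1 := alpha0_le_alphaE hε p.1
  have h22 : a2 ≤ A2 := alpha0_le_alphaE hε p.2
  have h33 : a3 ≤ A3 := alpha0_le_alphaE hε (p.1 + p.2)
  have p1 : (1:ℝ) ≤ a1 := one_le_alphaE le_rfl p.1
  have p2 : (1:ℝ) ≤ a2 := one_le_alphaE le_rfl p.2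
  have p3 : (1:ℝ) ≤ a3 := one_le_alphaE le_rfl (p.1 + p.2)
  have q1 : (1:ℝ) ≤ A1 := one_le_alphaE hε p.1
  have q2 : (1:ℝ) ≤ A2 := one_le_alphaE hε p.2
  have q3 : (1:ℝ) ≤ A3 := one_le_alphaE hε (p.1 + p.2)
  have z1 : (0:ℝ) < a1 := by linarith
  have z2 : (0:ℝ) < a2 := by linarith
  have z3 : (0:ℝ) < a3 := by linarith
  have w1 : (0:ℝ) < A1 := by linarith
  have w2 : (0:ℝ) < A2 := by linarith
  have w3 : (0:ℝ) < A3 := by linarith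
  have m1 : (0:ℝ) < 4*a1*a2*a3*a1 :=
    mul_pos (mul_pos (mul_pos (mul_pos four_pos z1) z2) z3) z1
  have m2 : (0:ℝ) < 4*A1*A2*A3 :=
    mul_pos (mul_pos (mul_pos four_pos w1) w2) w3
  have m3 : (0:ℝ) < 8*a1^2*a2^2*a3^2 :=
    mul_pos (mul_pos (mul_pos (by norm_num) (pow_pos z1 2)) (pow_pos z2 2)) (pow_pos z3 2)
  have m4 : (0:ℝ) < 4*a1^2*a2*a3 :=
    mul_pos (mul_pos (mul_pos four_pos (pow_pos z1 2)) z2) z3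
  have hd : 4*a1*a2*a3*a1 ≤ 4*A1*A2*A3*(A1+A2+A3) := by
    have l1 : 4*a1 ≤ 4*A1 := by linarith
    have l2 : 4*a1*a2 ≤ 4*A1*A2 :=
      mul_le_mul l1 h22 (by linarith) (by linarith)
    have l3 : 4*a1*a2*a3 ≤ 4*A1*A2*A3 :=
      mul_le_mul l2 h33 (by linarith) (by linarith [mul_pos (mul_pos four_pos w1) w2])
    exact mul_le_mul l3 (by linarith) (by linarith) (by linarith)
  have step1 : term ε p ≤ 1/(4*a1*a2*a3*a1) := by
    unfold term
    exact one_div_le_one_div_of_le m1 hd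
  have step2 : 1/(4*a1*a2*a3*a1) ≤ Fb p := by
    unfold Fb Gfun
    rw [← ha1d, ← ha2d, ← ha3d]
    have hR : (1:ℝ)/8 * ((a1^2)⁻¹*(a2^2)⁻¹ + (a1^2)⁻¹*(a3^2)⁻¹)
        = (a2^2+a3^2)/(8*a1^2*a2^2*a3^2) := by
      field_simp
      ring
    rw [hR, div_le_div_iff₀ m1 m3]
    have hint : 0 ≤ 4*a1^2*a2*a3 * (a2-a3)^2 :=
      mul_nonneg m4.le (sq_nonneg _)
    nlinarith [hint]
  linarith

/-- Proposition 3.14: `S(ε)` is finite for every `ε ∈ [0,1]`, `S(ε) → S(0)` as `ε ↓ 0`,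
and consequently the renormalization constants `c_ε = −2·S(ε)` converge to `c = −2·S(0)`. -/
theorem renormalization_constant_convergence :
    (∀ ε ∈ Set.Icc (0 : ℝ) 1,
      Summable (fun p : Z3 × Z3 =>
        1 / (4 * alphaE ε p.1 * alphaE ε p.2 * alphaE ε (p.1 + p.2) *
          (alphaE ε p.1 + alphaE ε p.2 + alphaE ε (p.1 + p.2))))) ∧
    Tendsto Sren (nhdsWithin 0 (Set.Ioi 0)) (nhds (Sren 0)) ∧
    Tendsto (fun ε => -2 * Sren ε) (nhdsWithin 0 (Set.Ioi 0)) (nhds (-2 * Sren 0)) := by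
  have hsum : ∀ ε : ℝ, 0 ≤ ε → Summable (term ε) := fun ε hε =>
    Summable.of_nonneg_of_le (term_nonneg hε) (term_le_Fb hε) summable_Fb
  have hT : Tendsto Sren (nhdsWithin 0 (Set.Ioi 0)) (nhds (Sren 0)) := by
    have := tendsto_tsum_of_dominated_convergence (𝓕 := nhdsWithin 0 (Set.Ioi 0))
      (f := fun ε p => term ε p) (g := term 0) (bound := Fb) summable_Fb ?_ ?_
    · have h2 : Sren = fun ε => ∑' k : Z3 × Z3, term ε k := by
        funext ε; rfl
      rw [h2]
      exact this
    · intro p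
      have hc : ContinuousAt (fun ε => term ε p) 0 := by
        have hden : Continuous (fun ε : ℝ => 4 * alphaE ε p.1 * alphaE ε p.2 *
            alphaE ε (p.1 + p.2) * (alphaE ε p.1 + alphaE ε p.2 + alphaE ε (p.1 + p.2))) := by
          unfold alphaE; fun_prop
        have hne : (4 * alphaE 0 p.1 * alphaE 0 p.2 * alphaE 0 (p.1 + p.2) *
            (alphaE 0 p.1 + alphaE 0 p.2 + alphaE 0 (p.1 + p.2))) ≠ 0 := by
          have h1 := alphaE_pos (le_refl (0:ℝ)) p.1
          have h2 := alphaE_pos (le_refl (0:ℝ)) p.2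
          have h3 := alphaE_pos (le_refl (0:ℝ)) (p.1 + p.2)
          positivity
        exact ContinuousAt.div continuousAt_const hden.continuousAt hne
      exact hc.tendsto.mono_left nhdsWithin_le_nhds
    · apply eventually_nhdsWithin_of_forall
      intro ε hε p
      have hε' : (0:ℝ) ≤ ε := le_of_lt hε
      rw [Real.norm_eq_abs, abs_of_nonneg (term_nonneg hε' p)]
      exact term_le_Fb hε' p
  refine ⟨fun ε hε => hsum ε hε.1, hT, hT.const_mul (-2)⟩
end
end
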